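/- arXiv:1405.2329 — 3 statements merged into one kernel-verified Lean document; each statement's English description precedes it below -/
import Mathlib

section
/- In any idempotent c-semiring ⟨A, +, ×, ⊥, ⊤⟩ with induced order ≤, for all a, b ∈ A the element a × b is the greatest lower bound of a and b: a × b ≤ a, a × b ≤ b, and for every e ∈ A, if e ≤ a and e ≤ b then e ≤ a × b. -/
/-- A c-semiring `⟨A, +, ×, ⊥, ⊤⟩`: `+` is commutative, associative and idempotent
with unit `⊥` and absorbing element `⊤`; `×` is commutative and associative with
unit `⊤` and absorbing element `⊥`; and `×` distributes over `+`. -/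
structure CSemiring (A : Type*) where
  add : A → A → A
  mul : A → A → A
  bot : A
  top : A
  add_comm : ∀ a b, add a b = add b a
  add_assoc : ∀ a b c, add (add a b) c = add a (add b c)
  add_idem : ∀ a, add a a = a
  add_unit : ∀ a, add a bot = a
  add_absorb : ∀ a, add a top = top
  mul_comm : ∀ a b, mul a b = mul b a
  mul_assoc : ∀ a b c, mul (mul a b) c = mul a (mul b c)
  mul_unit : ∀ a, mul a top = a
  mul_absorb : ∀ a, mul a bot = bot
  mul_add : ∀ a b c, mul a (add b c) = add (mul a b) (mul a c)

/-- The order induced by `+`: `a ≤ b` iff `a + b = b`. -/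
def CSemiring.le {A : Type*} (S : CSemiring A) (a b : A) : Prop := S.add a b = b

/-- Product `a₁ × ⋯ × aₙ` of a list of c-semiring elements (`⊤` for the empty list). -/
def CSemiring.prod {A : Type*} (S : CSemiring A) (l : List A) : A :=
  l.foldr S.mul S.top

/-- in an idempotent c-semiring, `a × b` is the greatest lower
bound of `a` and `b`. -/
theorem csemiring_idem_mul_glb {A : Type*} (S : CSemiring A)
    (hidem : ∀ a, S.mul a a = a) (a b : A) :
    S.le (S.mul a b) a ∧ S.le (S.mul a b) b ∧
    (∀ e, S.le e a → S.le e b → S.le e (S.mul a b)) := by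
  have hle : ∀ x y : A, S.le (S.mul x y) x := by
    intro x y
    have h1 : S.mul x (S.add y S.top) = S.add (S.mul x y) x := by
      rw [S.mul_add, S.mul_unit]
    rw [S.add_absorb, S.mul_unit] at h1
    exact h1.symm
  refine ⟨hle a b, ?_, ?_⟩
  · rw [S.mul_comm]; exact hle b a
  · intro e he1 he2
    unfold CSemiring.le at *
    have h : S.mul a b = S.add e (S.add (S.mul e b) (S.add (S.mul e a) (S.mul a b))) := by
      calc S.mul a b = S.mul (S.add e a) (S.add e b) := by rw [he1, he2]
        _ = S.add (S.mul (S.add e a) e) (S.mul (S.add e a) b) := S.mul_add _ _ _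
        _ = S.add (S.add (S.mul e e) (S.mul e a)) (S.add (S.mul e b) (S.mul a b)) := by
              rw [S.mul_comm _ e, S.mul_add, S.mul_comm _ b, S.mul_add, S.mul_comm e e,
                S.mul_comm b e, S.mul_comm b a]
        _ = S.add e (S.add (S.mul e b) (S.add (S.mul e a) (S.mul a b))) := by
              rw [hidem, S.add_assoc, ← S.add_assoc (S.mul e a),
                S.add_comm (S.mul e a), S.add_assoc]
    rw [h, ← S.add_assoc, S.add_idem, ← h]
end

section
/- In any idempotent c-semiring ⟨A, +, ×, ⊥, ⊤⟩ with induced order ≤, for every a ∈ A and every nonempty finite list a₁,…,aₙ of elements of A: a ≤ a₁ × ⋯ × aₙ if and only if a ≤ aᵢ for every i ∈ {1,…,n}. Hence the SELL promotion side condition a ≤ glb(a₁,…,aₙ) is equivalent to the SELLS promotion side condition a ≤ a₁ × ⋯ × aₙ. -/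
namespace CSemiring

variable {A : Type*} (S : CSemiring A)

lemma le_trans {a b c : A} (hab : S.le a b) (hbc : S.le b c) : S.le a c := by
  unfold CSemiring.le at *
  rw [← hbc, ← S.add_assoc, hab]

lemma mul_le_left (a b : A) : S.le (S.mul a b) a :=
  calc S.add (S.mul a b) a
      = S.add (S.mul a b) (S.mul a S.top) := by rw [S.mul_unit]
    _ = S.mul a (S.add b S.top) := (S.mul_add a b S.top).symm
    _ = a := by rw [S.add_absorb, S.mul_unit]

lemma mul_le_right (a b : A) : S.le (S.mul a b) b := by
  rw [S.mul_comm]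
  exact S.mul_le_left b a

lemma mul_le_mul_right {a b : A} (c : A) (hab : S.le a b) :
    S.le (S.mul a c) (S.mul b c) := by
  unfold CSemiring.le at *
  rw [S.mul_comm a c, S.mul_comm b c, ← S.mul_add, hab]

lemma le_mul_iff (hidem : ∀ a, S.mul a a = a) {a b c : A} :
    S.le a (S.mul b c) ↔ S.le a b ∧ S.le a c := by
  refine ⟨fun h => ⟨S.le_trans h (S.mul_le_left b c), S.le_trans h (S.mul_le_right b c)⟩, ?_⟩
  rintro ⟨hab, hac⟩
  have haa_ba : S.le (S.mul a a) (S.mul b a) := S.mul_le_mul_right a hab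
  have hba_bc : S.le (S.mul b a) (S.mul b c) := by
    rw [S.mul_comm b a, S.mul_comm b c]
    exact S.mul_le_mul_right b hac
  rw [hidem a] at haa_ba
  exact S.le_trans haa_ba hba_bc

lemma le_prod_iff (hidem : ∀ a, S.mul a a = a) (l : List A) (a : A) :
    S.le a (S.prod l) ↔ ∀ x ∈ l, S.le a x := by
  induction l with
  | nil => exact iff_of_true (S.add_absorb a) (by simp)
  | cons x xs ih =>
    change S.le a (S.mul x (S.prod xs)) ↔ _
    rw [S.le_mul_iff hidem, ih, List.forall_mem_cons]

end CSemiring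

theorem csemiring_idem_prod_glb_general {A : Type*} (S : CSemiring A)
    (hidem : ∀ a, S.mul a a = a) (l : List A) (a : A) :
    S.le a (S.prod l) ↔ ∀ x ∈ l, S.le a x :=
  S.le_prod_iff hidem l a

/-- in an idempotent c-semiring, for a nonempty list `a₁, …, aₙ`,
`a ≤ a₁ × ⋯ × aₙ` iff `a ≤ aᵢ` for every `i`; i.e. the SELL promotion
side condition `a ≤ glb(a₁,…,aₙ)` is equivalent to the SELLS one. -/
theorem csemiring_idem_prod_glb {A : Type*} (S : CSemiring A)
    (hidem : ∀ a, S.mul a a = a) (l : List A) (hl : l ≠ []) (a : A) :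
    S.le a (S.prod l) ↔ ∀ x ∈ l, S.le a x :=
  csemiring_idem_prod_glb_general S hidem l a
end

section
/- In any idempotent c-semiring ⟨A, +, ×, ⊥, ⊤⟩, the operation + distributes over ×: for all a, b, c ∈ A, a + (b × c) = (a + b) × (a + c). -/
/-- in an idempotent c-semiring, `+` distributes over `×`. -/
theorem csemiring_idem_add_distrib {A : Type*} (S : CSemiring A)
    (hidem : ∀ a, S.mul a a = a) (a b c : A) :
    S.add a (S.mul b c) = S.mul (S.add a b) (S.add a c) := by
  have absorb : ∀ x y : A, S.add x (S.mul x y) = x := by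
    intro x y
    have h1 : S.mul x (S.add S.top y) = S.add (S.mul x S.top) (S.mul x y) := S.mul_add x S.top y
    rw [S.mul_unit] at h1
    rw [← h1, S.add_comm S.top y, S.add_absorb, S.mul_unit]
  calc S.add a (S.mul b c)
      = S.add (S.add a (S.mul a c)) (S.add (S.mul b a) (S.mul b c)) := by
        rw [absorb a c, S.mul_comm b a, ← S.add_assoc, absorb a b]
    _ = S.add (S.add (S.mul a a) (S.mul a c)) (S.add (S.mul b a) (S.mul b c)) := by
        rw [hidem a]
    _ = S.add (S.mul a (S.add a c)) (S.mul b (S.add a c)) := by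
        rw [S.mul_add a a c, S.mul_add b a c]
    _ = S.mul (S.add a b) (S.add a c) := by
        rw [S.mul_comm a, S.mul_comm b, ← S.mul_add, S.mul_comm]
end
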